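/- For a finite graph Γ₁ with root o₁ and a finite rooted graph (Γ₂,o₂), the reciprocal Green functions of the comb product satisfy F_{Γ₁▷Γ₂}(z) = F_{Γ₁}(F_{Γ₂}(z)) wherever both sides are defined. -/

import Mathlib

open Matrix
open Classical

/-- The adjacency matrix of a finite simple graph, with complex entries. -/
noncomputable def adjMat {V : Type*} [Fintype V] (G : SimpleGraph V) : Matrix V V ℂ :=
  Matrix.of fun i j => if G.Adj i j then 1 else 0

/-- The comb product `Γ₁ ▷ (Γ₂,o₂)`: a copy of `Γ₂` is glued at its root `o₂` to every
vertex of `Γ₁`. -/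
def combProd {V₁ V₂ : Type*} (G₁ : SimpleGraph V₁) (G₂ : SimpleGraph V₂) (o₂ : V₂) :
    SimpleGraph (V₁ × V₂) where
  Adj p q := (G₁.Adj p.1 q.1 ∧ p.2 = o₂ ∧ q.2 = o₂) ∨ (p.1 = q.1 ∧ G₂.Adj p.2 q.2)
  symm := by
    constructor
    rintro p q (⟨h, h2, h3⟩ | ⟨h, h2⟩)
    · exact Or.inl ⟨h.symm, h3, h2⟩
    · exact Or.inr ⟨h.symm, h2.symm⟩
  loopless := by
    constructor
    rintro p (⟨h, -, -⟩ | ⟨-, h⟩)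
    · exact G₁.irrefl h
    · exact G₂.irrefl h

/-! The resolvent of the comb product is `1 ⊗ (z - A₂) - A₁ ⊗ E` with `E` the matrix unit at
`o₂`, a perturbation that is rank one in the second factor. Writing `B = z - A₂`, `g = B⁻¹ o₂ o₂`,
`f = g⁻¹` and `R = (f - A₁)⁻¹`, its inverse is `1 ⊗ B⁻¹ + (f A₁ R) ⊗ (B⁻¹ E B⁻¹)`, and since
`A₁ R = f R - 1` the `((i, o₂), (j, o₂))` entry of this is `R i j`. At `i = j = o₁` this reads
`G_{Γ₁▷Γ₂}(z) = G_{Γ₁}(F_{Γ₂}(z))`. -/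

open Kronecker

namespace Matrix

theorem inv_one_kronecker_sub_kronecker_single_apply {K m n : Type*} [Field K] [Fintype m]
    [Fintype n] [DecidableEq m] [DecidableEq n] (A : Matrix m m K) (B : Matrix n n K)
    (o : n) (f : K) (hB : IsUnit B) (hf : B⁻¹ o o * f = 1) (hC : IsUnit (f • 1 - A))
    (i j : m) :
    (1 ⊗ₖ B - A ⊗ₖ single o o 1 : Matrix (m × n) (m × n) K)⁻¹ (i, o) (j, o) =
      (f • 1 - A)⁻¹ i j := by
  set g := B⁻¹ o o
  set E : Matrix n n K := single o o 1
  set R := (f • 1 - A)⁻¹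
  have hBB : B * B⁻¹ = 1 := mul_nonsing_inv B ((isUnit_iff_isUnit_det B).mp hB)
  have hAR : A * R = f • R - 1 := by
    have hCR : (f • 1 - A) * R = 1 := mul_nonsing_inv _ ((isUnit_iff_isUnit_det _).mp hC)
    rw [sub_mul, smul_mul, Matrix.one_mul] at hCR
    rw [← hCR, sub_sub_cancel]
  have hB_BEB : B * (B⁻¹ * E * B⁻¹) = E * B⁻¹ := by
    rw [← Matrix.mul_assoc, ← Matrix.mul_assoc, hBB, Matrix.one_mul]
  have hE_BEB : E * (B⁻¹ * E * B⁻¹) = g • (E * B⁻¹) := by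
    rw [← Matrix.mul_assoc, ← Matrix.mul_assoc, single_mul_mul_single, one_mul, mul_one,
      ← smul_mul, smul_single, smul_eq_mul, mul_one]
  have hfAR : f • (A * R) = A + g • (A * (f • (A * R))) := by
    rw [Matrix.mul_smul, smul_smul, hf, one_smul]
    calc f • (A * R) = A * (1 + (f • R - 1)) := by rw [add_sub_cancel, Matrix.mul_smul]
      _ = A + A * (A * R) := by rw [hAR, Matrix.mul_add, Matrix.mul_one]
  have hinv : (1 ⊗ₖ B - A ⊗ₖ E)⁻¹ = 1 ⊗ₖ B⁻¹ + (f • (A * R)) ⊗ₖ (B⁻¹ * E * B⁻¹) := by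
    apply inv_eq_right_inv
    rw [sub_mul, Matrix.mul_add, Matrix.mul_add, ← mul_kronecker_mul, ← mul_kronecker_mul,
      ← mul_kronecker_mul, ← mul_kronecker_mul, Matrix.one_mul, Matrix.one_mul, Matrix.mul_one,
      hBB, one_kronecker_one, hB_BEB, hE_BEB, kronecker_smul, ← smul_kronecker,
      ← add_kronecker, ← hfAR, add_sub_cancel_right]
  have hBEB_apply : (B⁻¹ * E * B⁻¹) o o = g * g := by
    simp [E, g, mul_apply, single_apply, ite_and]
  rw [hinv, add_apply, kronecker_apply, kronecker_apply, hBEB_apply, smul_apply, hAR]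
  simp only [sub_apply, smul_apply, smul_eq_mul, one_apply]
  linear_combination ((g * f + 1) * R i j - (if i = j then 1 else 0) * g) * hf

end Matrix

theorem adjMat_combProd {V₁ V₂ : Type*} [Fintype V₁] [Fintype V₂] [DecidableEq V₁]
    [DecidableEq V₂] (G₁ : SimpleGraph V₁) (G₂ : SimpleGraph V₂) (o₂ : V₂) :
    adjMat (combProd G₁ G₂ o₂) = adjMat G₁ ⊗ₖ single o₂ o₂ 1 + 1 ⊗ₖ adjMat G₂ := by
  ext ⟨i, a⟩ ⟨j, b⟩
  by_cases hij : i = j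
  · subst hij
    simp [adjMat, combProd, single_apply]
  · by_cases hadj : G₁.Adj i j <;> simp [adjMat, combProd, single_apply, hij, hadj, eq_comm]

theorem smul_one_sub_adjMat_combProd {V₁ V₂ : Type*} [Fintype V₁] [Fintype V₂]
    [DecidableEq V₁] [DecidableEq V₂] (G₁ : SimpleGraph V₁) (G₂ : SimpleGraph V₂) (o₂ : V₂)
    (z : ℂ) :
    z • (1 : Matrix (V₁ × V₂) (V₁ × V₂) ℂ) - adjMat (combProd G₁ G₂ o₂) =
      1 ⊗ₖ (z • 1 - adjMat G₂) - adjMat G₁ ⊗ₖ single o₂ o₂ 1 := by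
  rw [adjMat_combProd]
  ext ⟨i, a⟩ ⟨j, b⟩
  by_cases hij : i = j <;> by_cases hab : a = b <;>
    simp [hij, hab] <;> ring

theorem F_combProd_general {V₁ V₂ : Type*} [Fintype V₁] [Fintype V₂]
    [DecidableEq V₁] [DecidableEq V₂]
    (G₁ : SimpleGraph V₁) (o₁ : V₁) (G₂ : SimpleGraph V₂) (o₂ : V₂) (z : ℂ)
    (h2 : IsUnit (z • (1 : Matrix V₂ V₂ ℂ) - adjMat G₂))
    (hg2 : (z • (1 : Matrix V₂ V₂ ℂ) - adjMat G₂)⁻¹ o₂ o₂ ≠ 0)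
    (h1 : IsUnit ((((z • (1 : Matrix V₂ V₂ ℂ) - adjMat G₂)⁻¹ o₂ o₂)⁻¹)
      • (1 : Matrix V₁ V₁ ℂ) - adjMat G₁)) :
    ((z • (1 : Matrix (V₁ × V₂) (V₁ × V₂) ℂ)
        - adjMat (combProd G₁ G₂ o₂))⁻¹ (o₁, o₂) (o₁, o₂))⁻¹
      = ((((z • (1 : Matrix V₂ V₂ ℂ) - adjMat G₂)⁻¹ o₂ o₂)⁻¹
          • (1 : Matrix V₁ V₁ ℂ) - adjMat G₁)⁻¹ o₁ o₁)⁻¹ := by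
  rw [smul_one_sub_adjMat_combProd, Matrix.inv_one_kronecker_sub_kronecker_single_apply _ _ o₂ _
    h2 (mul_inv_cancel₀ hg2) h1]

/-- Muraki's composition formula for the reciprocal Green functions of a comb product
of rooted graphs: `F_{Γ₁▷Γ₂}(z) = F_{Γ₁}(F_{Γ₂}(z))` wherever both sides are defined.
Here `G_Γ(z) = ⟨(zI - A_Γ)⁻¹ δ_o, δ_o⟩`, `F_Γ = 1/G_Γ`, and the root of the comb
product is `(o₁,o₂)`. -/
theorem F_combProd {V₁ V₂ : Type*} [Fintype V₁] [Fintype V₂]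
    [DecidableEq V₁] [DecidableEq V₂]
    (G₁ : SimpleGraph V₁) (o₁ : V₁) (G₂ : SimpleGraph V₂) (o₂ : V₂) (z : ℂ)
    (h2 : IsUnit (z • (1 : Matrix V₂ V₂ ℂ) - adjMat G₂))
    (hg2 : (z • (1 : Matrix V₂ V₂ ℂ) - adjMat G₂)⁻¹ o₂ o₂ ≠ 0)
    (h1 : IsUnit ((((z • (1 : Matrix V₂ V₂ ℂ) - adjMat G₂)⁻¹ o₂ o₂)⁻¹)
      • (1 : Matrix V₁ V₁ ℂ) - adjMat G₁))
    (hg1 : ((((z • (1 : Matrix V₂ V₂ ℂ) - adjMat G₂)⁻¹ o₂ o₂)⁻¹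
      • (1 : Matrix V₁ V₁ ℂ) - adjMat G₁)⁻¹ o₁ o₁) ≠ 0)
    (hc : IsUnit (z • (1 : Matrix (V₁ × V₂) (V₁ × V₂) ℂ) - adjMat (combProd G₁ G₂ o₂)))
    (hgc : (z • (1 : Matrix (V₁ × V₂) (V₁ × V₂) ℂ)
      - adjMat (combProd G₁ G₂ o₂))⁻¹ (o₁, o₂) (o₁, o₂) ≠ 0) :
    ((z • (1 : Matrix (V₁ × V₂) (V₁ × V₂) ℂ)
        - adjMat (combProd G₁ G₂ o₂))⁻¹ (o₁, o₂) (o₁, o₂))⁻¹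
      = ((((z • (1 : Matrix V₂ V₂ ℂ) - adjMat G₂)⁻¹ o₂ o₂)⁻¹
          • (1 : Matrix V₁ V₁ ℂ) - adjMat G₁)⁻¹ o₁ o₁)⁻¹ :=
  F_combProd_general G₁ o₁ G₂ o₂ z h2 hg2 h1
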